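/- arXiv:1103.4507 — 8 statements merged into one kernel-verified Lean document; each statement's English description precedes it below -/
import Mathlib

section
/- If S is a finite nonempty subset of {2,3,4,...} such that no two elements of S are consecutive integers, then the sum of the Fibonacci numbers f_t over t in S is strictly less than f_{max(S)+1}. -/
theorem fib_sum_holey_lt_aux (n : ℕ) : ∀ (S : Finset ℕ) (hne : S.Nonempty),
    (∀ s ∈ S, 2 ≤ s) → (∀ s ∈ S, s + 1 ∉ S) → S.max' hne = n →
    ∑ t ∈ S, Nat.fib t < Nat.fib (n + 1) := by
  induction n using Nat.strong_induction_on with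
  | _ n ih =>
  intro S hne h2 hholey hn
  have hnS : n ∈ S := hn ▸ S.max'_mem hne
  have hn2 : 2 ≤ n := h2 n hnS
  have hsum : ∑ t ∈ S, Nat.fib t = Nat.fib n + ∑ t ∈ S.erase n, Nat.fib t :=
    (Finset.add_sum_erase S Nat.fib hnS).symm
  rw [hsum]
  have hfib : Nat.fib (n + 1) = Nat.fib n + Nat.fib (n - 1) := by
    rw [show n + 1 = (n - 1) + 2 by omega, Nat.fib_add_two,
      show n - 1 + 1 = n by omega, Nat.add_comm]
  rcases (S.erase n).eq_empty_or_nonempty with he | hne'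
  · rw [he, Finset.sum_empty]
    have := Nat.fib_pos.mpr (show 0 < n - 1 by omega)
    omega
  · have hmax' : (S.erase n).max' hne' ≤ n - 2 := by
      have h1 : (S.erase n).max' hne' ≤ n := by
        apply Finset.max'_le
        intro y hy
        exact hn ▸ S.le_max' y (Finset.mem_of_mem_erase hy)
      have hmem : (S.erase n).max' hne' ∈ S.erase n := Finset.max'_mem _ _
      have hne1 : (S.erase n).max' hne' ≠ n := (Finset.mem_erase.mp hmem).1
      have hne2 : (S.erase n).max' hne' ≠ n - 1 := by
        intro h
        have hm : n - 1 ∈ S := h ▸ Finset.mem_of_mem_erase hmem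
        have := hholey (n - 1) hm
        rw [show n - 1 + 1 = n by omega] at this
        exact this hnS
      omega
    have hlt : (S.erase n).max' hne' < n := by omega
    have ihres := ih _ hlt (S.erase n) hne'
      (fun s hs => h2 s (Finset.mem_of_mem_erase hs))
      (fun s hs h => hholey s (Finset.mem_of_mem_erase hs) (Finset.mem_of_mem_erase h))
      rfl
    have hmono : Nat.fib ((S.erase n).max' hne' + 1) ≤ Nat.fib (n - 1) :=
      Nat.fib_mono (by omega)
    omega

theorem fib_sum_holey_lt (S : Finset ℕ) (hne : S.Nonempty)
    (h2 : ∀ s ∈ S, 2 ≤ s) (hholey : ∀ s ∈ S, s + 1 ∉ S) :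
    ∑ t ∈ S, Nat.fib t < Nat.fib (S.max' hne + 1) :=
  fib_sum_holey_lt_aux (S.max' hne) S hne h2 hholey rfl
end

section
/- If T and T' are two finite subsets of {2,3,4,...}, each containing no two consecutive integers, such that the sum of f_t over t in T equals the sum of f_t over t in T', then T = T'. -/
lemma zeck_bound : ∀ (m : ℕ) (T : Finset ℕ), (∀ t ∈ T, 2 ≤ t) →
    (∀ t ∈ T, t + 1 ∉ T) → (∀ t ∈ T, t ≤ m) →
    ∑ t ∈ T, Nat.fib t < Nat.fib (m + 1) := by
  intro m
  induction m using Nat.strong_induction_on with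
  | _ m ih =>
    intro T h2 hh hle
    rcases T.eq_empty_or_nonempty with rfl | hne
    · simp only [Finset.sum_empty]
      exact Nat.fib_pos.mpr (Nat.succ_pos m)
    · set M := T.max' hne with hM
      have hMmem : M ∈ T := T.max'_mem hne
      have hM2 : 2 ≤ M := h2 M hMmem
      have hMm : M ≤ m := hle M hMmem
      have hsplit : ∑ t ∈ T, Nat.fib t = Nat.fib M + ∑ t ∈ T.erase M, Nat.fib t := by
        rw [← Finset.add_sum_erase _ _ hMmem]
      have herase : ∀ t ∈ T.erase M, t ≤ M - 2 := by
        intro t ht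
        have htT := Finset.mem_of_mem_erase ht
        have htne := Finset.ne_of_mem_erase ht
        have htle : t ≤ M := T.le_max' t htT
        have htlt : t < M := lt_of_le_of_ne htle htne
        -- t ≠ M - 1: else t + 1 = M ∈ T contradicts holey
        have : t ≠ M - 1 := by
          intro h
          apply hh t htT
          have : t + 1 = M := by omega
          rw [this]; exact hMmem
        omega
      have hrec : ∑ t ∈ T.erase M, Nat.fib t < Nat.fib (M - 2 + 1) := by
        apply ih (M - 2) (by omega)
        · intro t ht; exact h2 t (Finset.mem_of_mem_erase ht)
        · intro t ht h1
          exact hh t (Finset.mem_of_mem_erase ht) (Finset.mem_of_mem_erase h1)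
        · exact herase
      have hMeq : Nat.fib M + Nat.fib (M - 2 + 1) = Nat.fib (M + 1) := by
        rw [show M - 2 + 1 = M - 1 by omega, show M + 1 = (M - 1) + 2 by omega,
          Nat.fib_add_two, show M - 1 + 1 = M by omega]
        omega
      calc ∑ t ∈ T, Nat.fib t = Nat.fib M + ∑ t ∈ T.erase M, Nat.fib t := hsplit
        _ < Nat.fib M + Nat.fib (M - 2 + 1) := by omega
        _ = Nat.fib (M + 1) := hMeq
        _ ≤ Nat.fib (m + 1) := Nat.fib_mono (by omega)

lemma zeck_unique_aux : ∀ (n : ℕ) (T T' : Finset ℕ), (∀ t ∈ T, 2 ≤ t) →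
    (∀ t ∈ T, t + 1 ∉ T) → (∀ t ∈ T', 2 ≤ t) → (∀ t ∈ T', t + 1 ∉ T') →
    ∑ t ∈ T, Nat.fib t = n → ∑ t ∈ T', Nat.fib t = n → T = T' := by
  intro n
  induction n using Nat.strong_induction_on with
  | _ n ih =>
    intro T T' hT2 hTh hT'2 hT'h hs hs'
    rcases T.eq_empty_or_nonempty with rfl | hne
    · simp at hs
      subst hs
      rcases T'.eq_empty_or_nonempty with rfl | hne'
      · rfl
      · exfalso
        have := Finset.sum_pos (fun t ht => Nat.fib_pos.mpr (Nat.lt_of_lt_of_le Nat.zero_lt_two (hT'2 t ht))) hne'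
        omega
    · have hpos : 0 < n := by
        rw [← hs]
        exact Finset.sum_pos (fun t ht => Nat.fib_pos.mpr (Nat.lt_of_lt_of_le Nat.zero_lt_two (hT2 t ht))) hne
      have hne' : T'.Nonempty := by
        by_contra h
        rw [Finset.not_nonempty_iff_eq_empty] at h
        subst h; simp at hs'; omega
      set M := T.max' hne with hM
      set M' := T'.max' hne' with hM'
      have hMmem := T.max'_mem hne
      have hM'mem := T'.max'_mem hne'
      have hMM' : M = M' := by
        by_contra hne2
        rcases Nat.lt_or_ge M M' with h | h
        · have h1 : n < Nat.fib (M + 1) :=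
            hs ▸ zeck_bound M T hT2 hTh (fun t ht => T.le_max' t ht)
          have h2 : Nat.fib (M + 1) ≤ Nat.fib M' := Nat.fib_mono (by omega)
          have h3 : Nat.fib M' ≤ n := hs' ▸ Finset.single_le_sum (fun t _ => Nat.zero_le _) hM'mem
          omega
        · have h : M' < M := by omega
          have h1 : n < Nat.fib (M' + 1) :=
            hs' ▸ zeck_bound M' T' hT'2 hT'h (fun t ht => T'.le_max' t ht)
          have h2 : Nat.fib (M' + 1) ≤ Nat.fib M := Nat.fib_mono (by omega)
          have h3 : Nat.fib M ≤ n := hs ▸ Finset.single_le_sum (fun t _ => Nat.zero_le _) hMmem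
          omega
      have hfibpos : 0 < Nat.fib M := Nat.fib_pos.mpr (Nat.lt_of_lt_of_le Nat.zero_lt_two (hT2 M hMmem))
      have hMmem' : M ∈ T' := hMM'.symm ▸ hM'mem
      have hsE : ∑ t ∈ T.erase M, Nat.fib t = n - Nat.fib M := by
        have h := Finset.add_sum_erase T Nat.fib hMmem
        rw [← hM] at h
        omega
      have hsE' : ∑ t ∈ T'.erase M, Nat.fib t = n - Nat.fib M := by
        have h := Finset.add_sum_erase T' Nat.fib hMmem'
        omega
      have hfible : Nat.fib M ≤ n := hs ▸ Finset.single_le_sum (fun t _ => Nat.zero_le _) hMmem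
      have heq : T.erase M = T'.erase M := by
        apply ih (n - Nat.fib M) (by omega)
        · intro t ht; exact hT2 t (Finset.mem_of_mem_erase ht)
        · intro t ht h1; exact hTh t (Finset.mem_of_mem_erase ht) (Finset.mem_of_mem_erase h1)
        · intro t ht; exact hT'2 t (Finset.mem_of_mem_erase ht)
        · intro t ht h1; exact hT'h t (Finset.mem_of_mem_erase ht) (Finset.mem_of_mem_erase h1)
        · exact hsE
        · exact hsE'
      have : insert M (T.erase M) = insert M (T'.erase M) := by rw [heq]
      rwa [Finset.insert_erase hMmem, Finset.insert_erase hMmem'] at this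

theorem zeckendorf_uniqueness (T T' : Finset ℕ)
    (hT2 : ∀ t ∈ T, 2 ≤ t) (hTholey : ∀ t ∈ T, t + 1 ∉ T)
    (hT'2 : ∀ t ∈ T', 2 ≤ t) (hT'holey : ∀ t ∈ T', t + 1 ∉ T')
    (hsum : ∑ t ∈ T, Nat.fib t = ∑ t ∈ T', Nat.fib t) :
    T = T' :=
  zeck_unique_aux (∑ t ∈ T, Nat.fib t) T T' hT2 hTholey hT'2 hT'holey rfl hsum.symm
end

section
/- For every nonnegative integer n, there exists exactly one finite subset T of {2,3,4,...} containing no two consecutive integers such that n is the sum of f_t over t in T (Zeckendorf's theorem). -/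
/-!
Mathlib's `Nat.zeckendorf` already puts the natural numbers in bijection with Zeckendorf
representations: strictly decreasing lists of indices `≥ 2`, consecutive entries differing by at
least `2`, via `l ↦ (l.map fib).sum`. For a strictly decreasing list, "consecutive entries differ by
at least `2`" just says that no two entries are consecutive integers, so listing a finite set in
decreasing order identifies the holey subsets of `{2, 3, …}` with Zeckendorf representations.
-/

namespace List

theorem isZeckendorfRep_iff_pairwise {l : List ℕ} :
    l.IsZeckendorfRep ↔ l.Pairwise (fun a b => b + 2 ≤ a) ∧ ∀ a ∈ l, 2 ≤ a := by
  have : IsTrans ℕ (fun a b => b + 2 ≤ a) := ⟨fun _ _ _ hab hbc => by omega⟩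
  simp [IsZeckendorfRep, isChain_iff_pairwise, pairwise_append]

theorem IsZeckendorfRep.sortedGT {l : List ℕ} (hl : l.IsZeckendorfRep) : l.SortedGT :=
  sortedGT_iff_pairwise.2 <| (isZeckendorfRep_iff_pairwise.1 hl).1.imp fun h => by omega

theorem SortedGT.pairwise_add_two_le_iff {l : List ℕ} (hl : l.SortedGT) :
    l.Pairwise (fun a b => b + 2 ≤ a) ↔ ∀ a ∈ l, a + 1 ∉ l := by
  constructor
  · intro h a ha ha'
    have : Std.Symm (fun a b : ℕ => b + 2 ≤ a ∨ a + 2 ≤ b) := ⟨fun _ _ => Or.symm⟩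
    have h' : l.Pairwise (fun a b => b + 2 ≤ a ∨ a + 2 ≤ b) := h.imp Or.inl
    have := h'.forall ha ha' (by omega)
    omega
  · intro h
    refine (sortedGT_iff_pairwise.1 hl).imp_of_mem fun {a b} ha hb hba => ?_
    have : a ≠ b + 1 := fun hab => h b hb (hab ▸ ha)
    omega

theorem SortedGT.isZeckendorfRep_iff {l : List ℕ} (hl : l.SortedGT) :
    l.IsZeckendorfRep ↔ (∀ a ∈ l, 2 ≤ a) ∧ ∀ a ∈ l, a + 1 ∉ l := by
  rw [isZeckendorfRep_iff_pairwise, hl.pairwise_add_two_le_iff, and_comm]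

end List

theorem Finset.isZeckendorfRep_sort_iff (T : Finset ℕ) :
    (T.sort (· ≥ ·)).IsZeckendorfRep ↔ (∀ t ∈ T, 2 ≤ t) ∧ ∀ t ∈ T, t + 1 ∉ T := by
  simp only [(T.sortedGT_sort).isZeckendorfRep_iff, Finset.mem_sort]

theorem Finset.sum_map_sort {α M : Type*} [DecidableEq α] [AddCommMonoid M] (r : α → α → Prop)
    [DecidableRel r] [IsTrans α r] [Std.Antisymm r] [Std.Total r] (s : Finset α) (f : α → M) :
    ((s.sort r).map f).sum = ∑ a ∈ s, f a := by
  rw [← List.sum_toFinset f (s.sort_nodup r), s.sort_toFinset]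

theorem zeckendorf_theorem (n : ℕ) :
    ∃! T : Finset ℕ, (∀ t ∈ T, 2 ≤ t) ∧ (∀ t ∈ T, t + 1 ∉ T) ∧
      n = ∑ t ∈ T, Nat.fib t := by
  have hrep := n.isZeckendorfRep_zeckendorf
  have hsort : n.zeckendorf.toFinset.sort (· ≥ ·) = n.zeckendorf :=
    (List.toFinset_sort _ hrep.sortedGT.nodup).2 hrep.sortedGT.sortedGE.pairwise
  refine ⟨n.zeckendorf.toFinset, ?_, ?_⟩
  · obtain ⟨h2, hc⟩ := n.zeckendorf.toFinset.isZeckendorfRep_sort_iff.1 (hsort.symm ▸ hrep)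
    refine ⟨h2, hc, ?_⟩
    rw [← Finset.sum_map_sort (· ≥ ·), hsort, Nat.sum_zeckendorf_fib]
  · rintro T ⟨h2, hc, rfl⟩
    rw [← Finset.sum_map_sort (· ≥ ·),
      Nat.zeckendorf_sum_fib (T.isZeckendorfRep_sort_iff.2 ⟨h2, hc⟩), Finset.sort_toFinset]
end

section
/- If S is a finite subset of {2,3,4,...} containing no two consecutive integers, then the sum over s in S of (φ-1)^s is at most φ-1, where φ = (1+√5)/2. -/
private lemma aux_x_bounds : 0 < (1 + Real.sqrt 5) / 2 - 1 ∧ (1 + Real.sqrt 5) / 2 - 1 < 1 ∧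
    ((1 + Real.sqrt 5) / 2 - 1) + ((1 + Real.sqrt 5) / 2 - 1)^2 = 1 := by
  have h5 : Real.sqrt 5 ^ 2 = 5 := Real.sq_sqrt (by norm_num)
  have h1 : (1:ℝ) < Real.sqrt 5 := by nlinarith [Real.sqrt_nonneg 5]
  have h3 : Real.sqrt 5 < 3 := by nlinarith [Real.sqrt_nonneg 5]
  refine ⟨by linarith, by linarith, by nlinarith⟩

private lemma aux_holey (n : ℕ) : ∀ (S : Finset ℕ), S.card = n →
    (∀ s ∈ S, s + 1 ∉ S) → ∀ m : ℕ, (∀ s ∈ S, m + 1 ≤ s) →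
    ∑ s ∈ S, ((1 + Real.sqrt 5) / 2 - 1) ^ s ≤ ((1 + Real.sqrt 5) / 2 - 1) ^ m := by
  obtain ⟨hx0, hx1, hxeq⟩ := aux_x_bounds
  set x : ℝ := (1 + Real.sqrt 5) / 2 - 1 with hx
  induction n using Nat.strong_induction_on with
  | _ n ih =>
    intro S hcard hholey m hm
    rcases S.eq_empty_or_nonempty with rfl | hne
    · simp [pow_pos hx0 m |>.le]
    · set k := S.min' hne with hk
      have hkS : k ∈ S := S.min'_mem hne
      have hkm : m + 1 ≤ k := hm k hkS
      obtain ⟨j, hj⟩ : ∃ j, k = j + 1 := ⟨k - 1, by omega⟩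
      have hjm : m ≤ j := by omega
      set S' := S.erase k with hS'
      have hcard' : S'.card = n - 1 := by rw [hS', Finset.card_erase_of_mem hkS, hcard]
      have hn1 : n - 1 < n := by
        have := Finset.card_pos.mpr hne; omega
      have hS'bound : ∀ s ∈ S', k + 2 ≤ s := by
        intro s hs
        have hsS := Finset.mem_of_mem_erase hs
        have hne' : s ≠ k := Finset.ne_of_mem_erase hs
        have hge : k ≤ s := S.min'_le s hsS
        have : s ≠ k + 1 := by
          intro h; exact hholey k hkS (h ▸ hsS)
        omega
      have ihS' : ∑ s ∈ S', x ^ s ≤ x ^ (k + 1) :=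
        ih (n-1) hn1 S' hcard' (fun s hs h => hholey s (Finset.mem_of_mem_erase hs)
          (Finset.mem_of_mem_erase h))
          (k + 1) (fun s hs => by have := hS'bound s hs; omega)
      have hsplit : ∑ s ∈ S, x ^ s = x ^ k + ∑ s ∈ S', x ^ s := by
        rw [hS', Finset.add_sum_erase _ _ hkS]
      rw [hsplit]
      have key : x ^ k + x ^ (k + 1) = x ^ j := by
        rw [hj]
        have h2 : x ^ (j+1) + x ^ (j+1+1) = x ^ j * (x + x ^ 2) := by ring
        rw [h2, hxeq, mul_one]
      have : x ^ j ≤ x ^ m := pow_le_pow_of_le_one hx0.le hx1.le hjm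
      nlinarith [ihS']

theorem holey_geom_sum_le (S : Finset ℕ)
    (h2 : ∀ s ∈ S, 2 ≤ s) (hholey : ∀ s ∈ S, s + 1 ∉ S) :
    ∑ s ∈ S, ((1 + Real.sqrt 5) / 2 - 1) ^ s ≤ (1 + Real.sqrt 5) / 2 - 1 := by
  have := aux_holey S.card S rfl hholey 1 (fun s hs => h2 s hs)
  simpa using this
end

section
/- Let T be a finite set and a_t an integer for each t in T. Then there exists a finite subset S of ℤ containing no two consecutive integers such that for every integer n satisfying n > max({-a_t : t ∈ T} ∪ {-s : s ∈ S}), one has ∑_{t∈T} f_{n+a_t} = ∑_{s∈S} f_{n+s}. -/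
/-! The shifted sums `n ↦ ∑ fibZ (n + c i)` obey the Fibonacci recurrence as soon as all indices are
nonnegative, so two of them agree from some point on once they agree at two consecutive points
`N`, `N + 1`. Take `N` large and let `S` be the Zeckendorf representation of
`V = ∑ t, fibZ (N + a t)`, shifted by `-N`; then both sides agree at `N`. At `N + 1` use
`F (m + 1) = φ F m + ψ ^ m`: both sides equal `φ V` up to an error `∑ ψ ^ m`. On the `T` side this
error is below `ψ ^ 2` for `N` large; on the `S` side it is at most `-ψ`, because Zeckendorf
indices are at least `2` and pairwise non-consecutive. Two integers differing by less than
`ψ ^ 2 - ψ = 1` are equal. -/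

/-- Fibonacci numbers indexed by integers, extended by zero on nonpositives. -/
def fibZ (m : ℤ) : ℕ := Nat.fib m.toNat

open Finset Filter Topology
open scoped goldenRatio

theorem fibZ_add_two {m : ℤ} (hm : 0 ≤ m) : fibZ (m + 2) = fibZ (m + 1) + fibZ m := by
  lift m to ℕ using hm
  exact Nat.fib_add_two.trans (add_comm _ _)

theorem sum_fibZ_add_two {ι : Type*} (s : Finset ι) (c : ι → ℤ) {n : ℤ}
    (hn : ∀ i ∈ s, 0 ≤ n + c i) :
    ∑ i ∈ s, fibZ (n + 2 + c i) = ∑ i ∈ s, fibZ (n + 1 + c i) + ∑ i ∈ s, fibZ (n + c i) := by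
  rw [← sum_add_distrib]
  refine sum_congr rfl fun i hi => ?_
  rw [add_right_comm, fibZ_add_two (hn i hi), add_right_comm n 1]

theorem eq_of_fib_recurrence {M : Type*} [Add M] [IsLeftCancelAdd M] {g h : ℤ → M} {n₀ N : ℤ}
    (hg : ∀ n ≥ n₀, g (n + 2) = g (n + 1) + g n) (hh : ∀ n ≥ n₀, h (n + 2) = h (n + 1) + h n)
    (hN : n₀ ≤ N) (h₀ : g N = h N) (h₁ : g (N + 1) = h (N + 1)) :
    ∀ n ≥ n₀, g n = h n := by
  have up : ∀ n, N ≤ n → g n = h n ∧ g (n + 1) = h (n + 1) := by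
    refine Int.leInduction ⟨h₀, h₁⟩ fun n hn ih => ⟨ih.2, ?_⟩
    rw [add_assoc, one_add_one_eq_two, hg n (hN.trans hn), hh n (hN.trans hn), ih.1, ih.2]
  have down : ∀ n, n ≤ N → n₀ ≤ n → g n = h n ∧ g (n + 1) = h (n + 1) := by
    refine Int.leInductionDown (fun _ => ⟨h₀, h₁⟩) fun n _ ih hn => ?_
    obtain ⟨e₀, e₁⟩ := ih (by omega)
    have hg' := hg (n - 1) hn
    have hh' := hh (n - 1) hn
    rw [show n - 1 + 2 = n + 1 by ring, sub_add_cancel] at *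
    exact ⟨add_left_cancel (hg'.symm.trans (e₁.trans (hh'.trans (by rw [e₀])))), e₀⟩
  intro n hn
  rcases le_total N n with hNn | hnN
  · exact (up n hNn).1
  · exact (down n hnN hn).1

theorem sum_fibZ_succ_sub_goldenRatio_mul {ι : Type*} (s : Finset ι) {c : ι → ℤ}
    (hc : ∀ i ∈ s, 0 ≤ c i) :
    ∑ i ∈ s, (fibZ (c i + 1) : ℝ) - φ * ∑ i ∈ s, (fibZ (c i) : ℝ) = ∑ i ∈ s, ψ ^ (c i).toNat := by
  rw [mul_sum, ← sum_sub_distrib]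
  refine sum_congr rfl fun i hi => ?_
  have hsucc : (c i + 1).toNat = (c i).toNat + 1 := by have := hc i hi; omega
  rw [← Real.fib_succ_sub_goldenRatio_mul_fib, fibZ, fibZ, hsucc]

theorem sum_fibZ_succ_eq_of_sum_fibZ_eq {ι κ : Type*} {s : Finset ι} {s' : Finset κ}
    {c : ι → ℤ} {c' : κ → ℤ} (hc : ∀ i ∈ s, 0 ≤ c i) (hc' : ∀ j ∈ s', 0 ≤ c' j)
    (h : ∑ i ∈ s, fibZ (c i) = ∑ j ∈ s', fibZ (c' j))
    (hψ : |∑ i ∈ s, ψ ^ (c i).toNat - ∑ j ∈ s', ψ ^ (c' j).toNat| < 1) :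
    ∑ i ∈ s, fibZ (c i + 1) = ∑ j ∈ s', fibZ (c' j + 1) := by
  have h' : ∑ i ∈ s, (fibZ (c i) : ℝ) = ∑ j ∈ s', (fibZ (c' j) : ℝ) := by exact_mod_cast h
  rw [← sum_fibZ_succ_sub_goldenRatio_mul s hc, ← sum_fibZ_succ_sub_goldenRatio_mul s' hc', h',
    sub_sub_sub_cancel_right, abs_sub_lt_iff] at hψ
  simp only [← Nat.cast_sum, sub_lt_iff_lt_add] at hψ
  have hlt : ∑ i ∈ s, fibZ (c i + 1) < 1 + ∑ j ∈ s', fibZ (c' j + 1) := by exact_mod_cast hψ.1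
  have hgt : ∑ j ∈ s', fibZ (c' j + 1) < 1 + ∑ i ∈ s, fibZ (c i + 1) := by exact_mod_cast hψ.2
  omega

theorem sum_pow_le_of_holey {K : Type*} [Field K] [LinearOrder K] [IsStrictOrderedRing K]
    {x : K} (hx₀ : 0 ≤ x) (hx₁ : x < 1) {Z : Finset ℕ} {k : ℕ} (hk : ∀ i ∈ Z, k ≤ i)
    (hZ : ∀ i ∈ Z, i + 1 ∉ Z) :
    ∑ i ∈ Z, x ^ i ≤ x ^ k / (1 - x ^ 2) := by
  -- `(1 + x) x ^ i = x ^ i + x ^ (i + 1)`, and these pairs of terms are disjoint for holey `Z`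
  have hdisj : Disjoint Z (Z.map (addRightEmbedding 1)) := by
    simp only [disjoint_left, Finset.mem_map, addRightEmbedding_apply, not_exists, not_and]
    rintro i hi j hj rfl
    exact hZ j hj hi
  have hsub : Z ∪ Z.map (addRightEmbedding 1) ⊆ Ico k (Z.sup id + 2) := by
    intro j hj
    simp only [mem_union, Finset.mem_map, addRightEmbedding_apply] at hj
    rcases hj with hj | ⟨i, hi, rfl⟩
    · have : j ≤ Z.sup id := le_sup (f := id) hj
      exact mem_Ico.2 ⟨hk j hj, by omega⟩
    · have : i ≤ Z.sup id := le_sup (f := id) hi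
      exact mem_Ico.2 ⟨(hk i hi).trans (Nat.le_succ i), by omega⟩
  have hpair : (1 + x) * ∑ i ∈ Z, x ^ i = ∑ j ∈ Z ∪ Z.map (addRightEmbedding 1), x ^ j := by
    rw [sum_union hdisj, sum_map, add_mul, one_mul, mul_sum]
    simp only [addRightEmbedding_apply, pow_succ, mul_comm x]
  rw [le_div_iff₀ (by nlinarith)]
  calc (∑ i ∈ Z, x ^ i) * (1 - x ^ 2) = (1 - x) * ((1 + x) * ∑ i ∈ Z, x ^ i) := by ring
    _ ≤ (1 - x) * ∑ j ∈ Ico k (Z.sup id + 2), x ^ j := by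
        rw [hpair]
        exact mul_le_mul_of_nonneg_left
          (sum_le_sum_of_subset_of_nonneg hsub fun _ _ _ => pow_nonneg hx₀ _) (by linarith)
    _ ≤ x ^ k := by
        rw [mul_comm, ← le_div_iff₀ (by linarith)]
        exact geom_sum_Ico_le_of_lt_one hx₀ hx₁

theorem Real.abs_goldenConj_lt_one : |ψ| < 1 :=
  abs_lt.2 ⟨Real.neg_one_lt_goldenConj, Real.goldenConj_neg.trans one_pos⟩

theorem abs_sum_goldenConj_pow_le_of_holey {Z : Finset ℕ} (hZ₂ : ∀ i ∈ Z, 2 ≤ i)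
    (hZ : ∀ i ∈ Z, i + 1 ∉ Z) : |∑ i ∈ Z, ψ ^ i| ≤ -ψ :=
  calc |∑ i ∈ Z, ψ ^ i| ≤ ∑ i ∈ Z, |ψ| ^ i :=
        (abs_sum_le_sum_abs _ _).trans_eq (by simp [abs_pow])
    _ ≤ |ψ| ^ 2 / (1 - |ψ| ^ 2) :=
        sum_pow_le_of_holey (abs_nonneg ψ) Real.abs_goldenConj_lt_one hZ₂ hZ
    _ = -ψ := by
        rw [sq_abs, Real.goldenConj_sq, div_eq_iff (by linarith [Real.goldenConj_neg])]
        linear_combination -Real.goldenConj_sq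

theorem exists_holey_fib_rep (V : ℕ) :
    ∃ Z : Finset ℕ, (∀ i ∈ Z, 2 ≤ i) ∧ (∀ i ∈ Z, i + 1 ∉ Z) ∧ ∑ i ∈ Z, Nat.fib i = V := by
  have : Trans (fun a b : ℕ => b + 2 ≤ a) (fun a b => b + 2 ≤ a) (fun a b => b + 2 ≤ a) :=
    ⟨fun h₁ h₂ => by omega⟩
  obtain ⟨hl, -, h₀⟩ := List.pairwise_append.1 <|
    List.isChain_iff_pairwise.1 (Nat.isZeckendorfRep_zeckendorf V)
  refine ⟨V.zeckendorf.toFinset,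
    fun i hi => by simpa using h₀ i (List.mem_toFinset.1 hi) 0 (by simp), fun i hi hi₁ => ?_, ?_⟩
  · have : Std.Symm fun a b : ℕ => b + 2 ≤ a ∨ a + 2 ≤ b := ⟨fun _ _ h => h.symm⟩
    have hsymm : V.zeckendorf.Pairwise fun a b => b + 2 ≤ a ∨ a + 2 ≤ b := hl.imp Or.inl
    have := hsymm.forall (List.mem_toFinset.1 hi) (List.mem_toFinset.1 hi₁) (by omega)
    omega
  · have hnodup : V.zeckendorf.Nodup := hl.imp fun h => by omega
    rw [List.sum_toFinset _ hnodup, Nat.sum_zeckendorf_fib]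

theorem exists_shift_sum_pow_lt {ι : Type*} (s : Finset ι) (c : ι → ℤ) {x ε : ℝ} (hx₀ : 0 ≤ x)
    (hx₁ : x < 1) (hε : 0 < ε) :
    ∃ N : ℤ, (∀ i ∈ s, 0 ≤ N + c i) ∧ ∑ i ∈ s, x ^ (N + c i).toNat < ε := by
  have hlim : Tendsto (fun N : ℤ => ∑ i ∈ s, x ^ (N + c i).toNat) atTop (𝓝 0) := by
    simpa using tendsto_finsetSum s fun i _ =>
      (tendsto_pow_atTop_nhds_zero_of_lt_one hx₀ hx₁).comp
        (tendsto_atTop_atTop.2 fun K => ⟨K - c i, fun N hN => by omega⟩)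
  obtain ⟨N, hN, hsmall⟩ :=
    (((eventually_all_finset s).2 fun i _ => eventually_ge_atTop (-c i)).and
      (hlim.eventually (gt_mem_nhds hε))).exists
  exact ⟨N, fun i hi => by linarith [hN i hi], hsmall⟩

theorem exists_holey_shifted_fib_rep (N : ℤ) (V : ℕ) :
    ∃ S : Finset ℤ, (∀ s ∈ S, s + 1 ∉ S) ∧ (∀ s ∈ S, 2 ≤ N + s) ∧
      ∑ s ∈ S, fibZ (N + s) = V ∧ |∑ s ∈ S, ψ ^ (N + s).toNat| ≤ -ψ := by
  obtain ⟨Z, hZ₂, hZ, hZsum⟩ := exists_holey_fib_rep V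
  have hinj : Set.InjOn (fun i : ℕ => (i : ℤ) - N) Z := fun i _ j _ hij => by simpa using hij
  refine ⟨Z.image fun i : ℕ => (i : ℤ) - N, ?_, ?_, ?_, ?_⟩
  · simp only [mem_image]
    rintro _ ⟨i, hi, rfl⟩ ⟨j, hj, hji⟩
    obtain rfl : j = i + 1 := by omega
    exact hZ i hi hj
  · simp only [mem_image]
    rintro _ ⟨i, hi, rfl⟩
    have := hZ₂ i hi
    omega
  · simp [sum_image hinj, fibZ, hZsum]
  · simpa [sum_image hinj] using abs_sum_goldenConj_pow_le_of_holey hZ₂ hZ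

theorem generalized_zeckendorf_existence {α : Type*} (T : Finset α) (a : α → ℤ) :
    ∃ S : Finset ℤ, (∀ s ∈ S, s + 1 ∉ S) ∧
      ∀ n : ℤ, (∀ t ∈ T, -a t < n) → (∀ s ∈ S, -s < n) →
        ∑ t ∈ T, fibZ (n + a t) = ∑ s ∈ S, fibZ (n + s) := by
  obtain ⟨N, hN, hTψ⟩ := exists_shift_sum_pow_lt T a (abs_nonneg ψ) Real.abs_goldenConj_lt_one
    (sq_pos_of_ne_zero Real.goldenConj_ne_zero)
  obtain ⟨S, hS, hS₂, hS₀, hSψ⟩ := exists_holey_shifted_fib_rep N (∑ t ∈ T, fibZ (N + a t))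
  refine ⟨S, hS, fun n hTn hSn => ?_⟩
  have h₁ : ∑ t ∈ T, fibZ (N + 1 + a t) = ∑ s ∈ S, fibZ (N + 1 + s) := by
    simp only [add_right_comm N 1]
    refine sum_fibZ_succ_eq_of_sum_fibZ_eq hN (fun s hs => by linarith [hS₂ s hs]) hS₀.symm ?_
    calc _ ≤ |∑ t ∈ T, ψ ^ (N + a t).toNat| + |∑ s ∈ S, ψ ^ (N + s).toNat| := abs_sub _ _
      _ < ψ ^ 2 + -ψ := add_lt_add_of_lt_of_le
          ((abs_sum_le_sum_abs _ _).trans_lt (by simpa [abs_pow] using hTψ)) hSψ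
      _ = 1 := by rw [Real.goldenConj_sq]; ring
  refine eq_of_fib_recurrence (g := fun m => ∑ t ∈ T, fibZ (m + a t))
    (h := fun m => ∑ s ∈ S, fibZ (m + s)) (n₀ := min n N)
    (fun m hm => sum_fibZ_add_two T a fun t ht => ?_)
    (fun m hm => sum_fibZ_add_two S id fun s hs => ?_)
    (min_le_right n N) hS₀.symm h₁ n (min_le_left n N)
  · have := hTn t ht
    have := hN t ht
    omega
  · have := hSn s hs
    have := hS₂ s hs
    dsimp only [id]
    omega
end

section
/- Let T be a finite set with integers a_t for t ∈ T, and let S, S' be two finite holey subsets of ℤ such that for every sufficiently large integer n (namely n > max({-a_t} ∪ {-s : s ∈ S}) for S, and similarly for S'), ∑_{t∈T} f_{n+a_t} = ∑_{s∈S} f_{n+s} and ∑_{t∈T} f_{n+a_t} = ∑_{s∈S'} f_{n+s}. Then S = S'. -/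
lemma fibZ_pos {m : ℤ} (h : 1 ≤ m) : 0 < fibZ m :=
  Nat.fib_pos.2 (by omega)

lemma sum_fib_lt : ∀ (m : ℕ) (F : Finset ℕ), (∀ k ∈ F, k + 1 ∉ F) →
    (∀ k ∈ F, 2 ≤ k ∧ k ≤ m) → ∑ k ∈ F, Nat.fib k < Nat.fib (m + 1) := by
  intro m
  induction m using Nat.strong_induction_on with
  | _ m IH =>
    intro F hF hFm
    rcases F.eq_empty_or_nonempty with rfl | hne
    · simp
    · set M := F.max' hne with hMdef
      have hMF : M ∈ F := F.max'_mem hne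
      obtain ⟨hM2, hMm⟩ := hFm M hMF
      have hsum : ∑ k ∈ F, Nat.fib k = Nat.fib M + ∑ k ∈ F.erase M, Nat.fib k :=
        (Finset.add_sum_erase _ _ hMF).symm
      have herase : ∑ k ∈ F.erase M, Nat.fib k < Nat.fib (M - 2 + 1) := by
        apply IH (M - 2) (by omega)
        · intro k hk h
          exact hF k (Finset.mem_erase.1 hk).2 (Finset.mem_erase.1 h).2
        · intro k hk
          obtain ⟨hne', hkF⟩ := Finset.mem_erase.1 hk
          obtain ⟨h2, _⟩ := hFm k hkF
          have hle : k ≤ M := F.le_max' k hkF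
          have hk1 : k ≠ M - 1 := by
            intro h
            have hkM : k + 1 = M := by omega
            exact hF k hkF (hkM ▸ hMF)
          exact ⟨h2, by omega⟩
      have hfib : Nat.fib (M + 1) = Nat.fib (M - 1) + Nat.fib M := by
        have := Nat.fib_add_two (n := M - 1)
        have h1 : M - 1 + 2 = M + 1 := by omega
        have h2 : M - 1 + 1 = M := by omega
        rw [h1, h2] at this
        exact this
      have h21 : M - 2 + 1 = M - 1 := by omega
      rw [h21] at herase
      have : ∑ k ∈ F, Nat.fib k < Nat.fib (M + 1) := by
        rw [hsum, hfib]
        omega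
      exact lt_of_lt_of_le this (Nat.fib_mono (by omega))

lemma sum_fibZ_lt (S : Finset ℤ) (hS : ∀ s ∈ S, s + 1 ∉ S) (M : ℤ)
    (hM : ∀ s ∈ S, s ≤ M) (n : ℤ) (hn : ∀ s ∈ S, 2 ≤ n + s) (hnM : 0 ≤ n + M) :
    ∑ s ∈ S, fibZ (n + s) < fibZ (n + M + 1) := by
  have hinj : ∀ x ∈ S, ∀ y ∈ S, (n + x).toNat = (n + y).toNat → x = y := by
    intro x hx y hy h
    have := hn x hx; have := hn y hy
    omega
  have himg : ∑ k ∈ S.image (fun s => (n + s).toNat), Nat.fib k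
      = ∑ s ∈ S, fibZ (n + s) := Finset.sum_image hinj
  rw [← himg]
  have h1 : (n + M + 1).toNat = (n + M).toNat + 1 := by omega
  unfold fibZ
  rw [h1]
  apply sum_fib_lt
  · intro k hk h
    obtain ⟨x, hx, hkx⟩ := Finset.mem_image.1 hk
    obtain ⟨y, hy, hky⟩ := Finset.mem_image.1 h
    have := hn x hx; have := hn y hy
    have : y = x + 1 := by omega
    exact hS x hx (this ▸ hy)
  · intro k hk
    obtain ⟨x, hx, hkx⟩ := Finset.mem_image.1 hk
    have := hn x hx
    have := hM x hx
    omega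

lemma key : ∀ c : ℕ, ∀ S S' : Finset ℤ, S.card + S'.card = c →
    (∀ s ∈ S, s + 1 ∉ S) → (∀ s ∈ S', s + 1 ∉ S') →
    ∀ N : ℤ, (∀ n : ℤ, N ≤ n → ∑ s ∈ S, fibZ (n + s) = ∑ s ∈ S', fibZ (n + s)) →
    S = S' := by
  intro c
  induction c using Nat.strong_induction_on with
  | _ c IH =>
    intro S S' hc hS hS' N heq
    rcases S.eq_empty_or_nonempty with rfl | hSne
    · rcases S'.eq_empty_or_nonempty with rfl | hS'ne
      · rfl
      · exfalso
        set n : ℤ := max N (2 - S'.min' hS'ne) with hn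
        have h1 : N ≤ n := le_max_left _ _
        have h2 : ∀ s ∈ S', 2 ≤ n + s := by
          intro s hs
          have := S'.min'_le s hs
          have := le_max_right N (2 - S'.min' hS'ne)
          omega
        have := heq n h1
        simp only [Finset.sum_empty] at this
        have hpos : 0 < ∑ s ∈ S', fibZ (n + s) := by
          refine Finset.sum_pos (fun s hs => fibZ_pos ?_) hS'ne
          have := h2 s hs; omega
        omega
    · rcases S'.eq_empty_or_nonempty with rfl | hS'ne
      · exfalso
        set n : ℤ := max N (2 - S.min' hSne) with hn
        have h1 : N ≤ n := le_max_left _ _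
        have h2 : ∀ s ∈ S, 2 ≤ n + s := by
          intro s hs
          have := S.min'_le s hs
          have := le_max_right N (2 - S.min' hSne)
          omega
        have := heq n h1
        simp only [Finset.sum_empty] at this
        have hpos : 0 < ∑ s ∈ S, fibZ (n + s) := by
          refine Finset.sum_pos (fun s hs => fibZ_pos ?_) hSne
          have := h2 s hs; omega
        omega
      · -- both nonempty
        have hUne : (S ∪ S').Nonempty := Finset.Nonempty.inl hSne
        set n : ℤ := max N (2 - (S ∪ S').min' hUne) with hn
        have h1 : N ≤ n := le_max_left _ _
        have h2 : ∀ s ∈ S ∪ S', 2 ≤ n + s := by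
          intro s hs
          have := (S ∪ S').min'_le s hs
          have := le_max_right N (2 - (S ∪ S').min' hUne)
          omega
        have h2S : ∀ s ∈ S, 2 ≤ n + s := fun s hs => h2 s (Finset.mem_union_left _ hs)
        have h2S' : ∀ s ∈ S', 2 ≤ n + s := fun s hs => h2 s (Finset.mem_union_right _ hs)
        set m := S.max' hSne with hm
        set m' := S'.max' hS'ne with hm'
        have hmS : m ∈ S := S.max'_mem hSne
        have hm'S' : m' ∈ S' := S'.max'_mem hS'ne
        have hmm' : m = m' := by
          by_contra hne
          rcases lt_or_gt_of_ne hne with hlt | hlt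
          · -- m < m', so sum over S < fibZ (n+m+1) ≤ fibZ (n+m') ≤ sum over S'
            have hlt1 : ∑ s ∈ S, fibZ (n + s) < fibZ (n + m + 1) :=
              sum_fibZ_lt S hS m (fun s hs => S.le_max' s hs) n h2S (by have := h2S m hmS; omega)
            have hle2 : fibZ (n + m + 1) ≤ fibZ (n + m') := by
              unfold fibZ
              apply Nat.fib_mono
              have := h2S m hmS; have := h2S' m' hm'S'
              omega
            have hle3 : fibZ (n + m') ≤ ∑ s ∈ S', fibZ (n + s) :=
              Finset.single_le_sum (f := fun s => fibZ (n + s)) (fun s _ => Nat.zero_le _) hm'S'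
            have := heq n h1
            omega
          · have hlt1 : ∑ s ∈ S', fibZ (n + s) < fibZ (n + m' + 1) :=
              sum_fibZ_lt S' hS' m' (fun s hs => S'.le_max' s hs) n h2S' (by have := h2S' m' hm'S'; omega)
            have hle2 : fibZ (n + m' + 1) ≤ fibZ (n + m) := by
              unfold fibZ
              apply Nat.fib_mono
              have := h2S m hmS; have := h2S' m' hm'S'
              omega
            have hle3 : fibZ (n + m) ≤ ∑ s ∈ S, fibZ (n + s) :=
              Finset.single_le_sum (f := fun s => fibZ (n + s)) (fun s _ => Nat.zero_le _) hmS
            have := heq n h1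
            omega
        -- erase m from both
        have hmS' : m ∈ S' := hmm' ▸ hm'S'
        have heq' : ∀ k : ℤ, N ≤ k →
            ∑ s ∈ S.erase m, fibZ (k + s) = ∑ s ∈ S'.erase m, fibZ (k + s) := by
          intro k hk
          have e1 : ∑ s ∈ S, fibZ (k + s) = fibZ (k + m) + ∑ s ∈ S.erase m, fibZ (k + s) :=
            (Finset.add_sum_erase _ _ hmS).symm
          have e2 : ∑ s ∈ S', fibZ (k + s) = fibZ (k + m) + ∑ s ∈ S'.erase m, fibZ (k + s) :=
            (Finset.add_sum_erase _ _ hmS').symm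
          have := heq k hk
          omega
        have hcard : (S.erase m).card + (S'.erase m).card < c := by
          have := Finset.card_erase_of_mem hmS
          have := Finset.card_erase_of_mem hmS'
          have := Finset.card_pos.2 hSne
          have := Finset.card_pos.2 hS'ne
          omega
        have herased : S.erase m = S'.erase m := by
          apply IH _ hcard _ _ rfl _ _ N heq'
          · intro s hs h
            exact hS s (Finset.mem_erase.1 hs).2 (Finset.mem_erase.1 h).2
          · intro s hs h
            exact hS' s (Finset.mem_erase.1 hs).2 (Finset.mem_erase.1 h).2
        calc S = insert m (S.erase m) := (Finset.insert_erase hmS).symm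
          _ = insert m (S'.erase m) := by rw [herased]
          _ = S' := Finset.insert_erase hmS'

theorem generalized_zeckendorf_uniqueness {α : Type*} (T : Finset α) (a : α → ℤ)
    (S S' : Finset ℤ)
    (hS : ∀ s ∈ S, s + 1 ∉ S) (hS' : ∀ s ∈ S', s + 1 ∉ S')
    (hSsum : ∀ n : ℤ, (∀ t ∈ T, -a t < n) → (∀ s ∈ S, -s < n) →
      ∑ t ∈ T, fibZ (n + a t) = ∑ s ∈ S, fibZ (n + s))
    (hS'sum : ∀ n : ℤ, (∀ t ∈ T, -a t < n) → (∀ s ∈ S', -s < n) →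
      ∑ t ∈ T, fibZ (n + a t) = ∑ s ∈ S', fibZ (n + s)) :
    S = S' := by
  classical
  obtain ⟨M, hM⟩ := Finset.exists_le
    ((T.image (fun t => -a t)) ∪ (S.image (fun s => -s)) ∪ (S'.image (fun s => -s)))
  apply key (S.card + S'.card) S S' rfl hS hS' (M + 1)
  intro n hn
  have hT : ∀ t ∈ T, -a t < n := by
    intro t ht
    have := hM (-a t) (by
      apply Finset.mem_union_left
      apply Finset.mem_union_left
      exact Finset.mem_image_of_mem _ ht)
    omega
  have hSn : ∀ s ∈ S, -s < n := by
    intro s hs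
    have := hM (-s) (by
      apply Finset.mem_union_left
      apply Finset.mem_union_right
      exact Finset.mem_image_of_mem _ hs)
    omega
  have hS'n : ∀ s ∈ S', -s < n := by
    intro s hs
    have := hM (-s) (by
      apply Finset.mem_union_right
      exact Finset.mem_image_of_mem _ hs)
    omega
  exact (hSsum n hT hSn).symm.trans (hS'sum n hT hS'n)
end

section
/- Let T be a finite set with integers a_t for t ∈ T. Then there exists exactly one finite subset S of ℤ containing no two consecutive integers such that ∑_{t∈T} f_{n+a_t} = ∑_{s∈S} f_{n+s} holds for every integer n with n > max({-a_t : t ∈ T} ∪ {-s : s ∈ S}) (generalized Zeckendorf family identities). -/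
/-!
Call `g : ℤ → R` Fibonacci-like if `g k + g (k + 1) = g (k + 2)`. The carry rules
`g (b - 1) + g b = g (b + 1)` and `g b + g b = g (b - 2) + g (b + 1)` rewrite any sum `∑ t, g (a t)`
as a sum over a holey set `S`, and the rewriting depends only on the exponents, not on `g`. Applied
to the `ℤ → ℤ`-valued sequence `k ↦ (n ↦ Int.fib (n + k))` this gives the identity for all `n` at
once. For uniqueness, take `n` so large that all indices `n + s` are at least `2`: both sides are
then Zeckendorf representations of the same natural number.
-/

def IsHoley {M : Type*} [Add M] [One M] (S : Finset M) : Prop := ∀ s ∈ S, s + 1 ∉ S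

theorem IsHoley.erase {M : Type*} [Add M] [One M] [DecidableEq M] {S : Finset M}
    (hS : IsHoley S) (x : M) : IsHoley (S.erase x) :=
  fun s hs hs1 => hS s (Finset.mem_of_mem_erase hs) (Finset.mem_of_mem_erase hs1)

theorem IsHoley.insert {S : Finset ℤ} (hS : IsHoley S) {c : ℤ} (hc1 : c + 1 ∉ S)
    (hc : c - 1 ∉ S) : IsHoley (insert c S) := by
  intro s hs hs1
  rw [Finset.mem_insert] at hs hs1
  rcases hs with rfl | hs
  · exact hs1.elim (by omega) hc1
  · rcases hs1 with h | h
    · exact hc (by rwa [show c - 1 = s by omega])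
    · exact hS s hs h

theorem card_filter_erase_sub_one_le {S : Finset ℤ} {b : ℤ} (hb1 : b - 1 ∈ S) :
    ((S.erase (b - 1)).filter (· ≤ b + 1)).card ≤ (S.filter (· ≤ b)).card := by
  have hsub : (S.erase (b - 1)).filter (· ≤ b + 1) ⊆
      (insert (b + 1) (S.filter (· ≤ b))).erase (b - 1) := by
    intro x hx
    simp only [Finset.mem_filter, Finset.mem_erase, Finset.mem_insert] at hx ⊢
    grind
  have := Finset.card_insert_le (b + 1) (S.filter (· ≤ b))
  have := (Finset.card_le_card hsub).trans_eq (Finset.card_erase_of_mem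
    (Finset.mem_insert_of_mem (Finset.mem_filter.mpr ⟨hb1, by omega⟩)))
  omega

section FibonacciLike

variable {R : Type*} [AddCommMonoid R] {g : ℤ → R}

theorem add_self_eq_sub_two_add_add_one (hg : ∀ k, g k + g (k + 1) = g (k + 2)) (b : ℤ) :
    g b + g b = g (b - 2) + g (b + 1) := by
  have h₁ := hg (b - 2)
  have h₂ := hg (b - 1)
  rw [show b - 2 + 1 = b - 1 by ring, show b - 2 + 2 = b by ring] at h₁
  rw [show b - 1 + 1 = b by ring, show b - 1 + 2 = b + 1 by ring] at h₂
  rw [← h₂, ← h₁, add_assoc]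

theorem IsHoley.exists_sum_eq_add_of_notMem (hg : ∀ k, g k + g (k + 1) = g (k + 2))
    {X : Finset ℤ} (hX : IsHoley X) {c : ℤ} (hc : c ∉ X) (hc1 : c - 1 ∉ X) :
    ∃ Y : Finset ℤ, IsHoley Y ∧ Y.card ≤ X.card + 1 ∧ (∀ x < c, x ∈ Y ↔ x ∈ X) ∧
      ∑ y ∈ Y, g y = g c + ∑ x ∈ X, g x := by
  by_cases hc2 : c + 1 ∈ X
  · have hmem : c + 2 ∉ X.erase (c + 1) := fun h =>
      hX _ hc2 (by rw [add_assoc]; exact Finset.mem_of_mem_erase h)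
    obtain ⟨Y, hY, hcard, hlow, hsum⟩ := (hX.erase (c + 1)).exists_sum_eq_add_of_notMem hg hmem
      (by simp [show c + 2 - 1 = c + 1 by ring])
    refine ⟨Y, hY, ?_, fun x hx => ?_, ?_⟩
    · rw [Finset.card_erase_of_mem hc2] at hcard
      omega
    · rw [hlow x (by omega), Finset.mem_erase, and_iff_right (by omega)]
    · rw [hsum, ← Finset.add_sum_erase X g hc2, ← hg c, add_assoc]
  · exact ⟨Insert.insert c X, hX.insert hc2 hc1, Finset.card_insert_le _ _,
      fun x hx => by rw [Finset.mem_insert, or_iff_right (by omega)], Finset.sum_insert hc⟩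
termination_by X.card
decreasing_by exact Finset.card_erase_lt_of_mem hc2

theorem IsHoley.exists_sum_eq_add (hg : ∀ k, g k + g (k + 1) = g (k + 2)) {S : Finset ℤ}
    (hS : IsHoley S) (b : ℤ) :
    ∃ S' : Finset ℤ, IsHoley S' ∧ ∑ s ∈ S', g s = g b + ∑ s ∈ S, g s := by
  by_cases hb : b ∈ S
  · -- Carry `b + 1` upwards first; this leaves everything below `b` alone, so adding `b - 2`
    -- afterwards meets one element fewer at or below its position.
    obtain ⟨S₁, hS₁, hcard, hlow, hsum₁⟩ := (hS.erase b).exists_sum_eq_add_of_notMem hg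
      (c := b + 1) (fun h => hS b hb (Finset.mem_of_mem_erase h)) (by simp)
    have hfilter : (S₁.filter (· ≤ b - 2)).card = (S.filter (· ≤ b - 2)).card := by
      congr 1
      ext x
      by_cases hx : x ≤ b - 2
      · simp [hlow x (by omega), hx, show x ≠ b by omega]
      · simp [hx]
    have hlt : (S.filter (· ≤ b - 2)).card < (S.filter (· ≤ b)).card := by
      refine Finset.card_lt_card (Finset.ssubset_iff_of_subset ?_ |>.mpr ⟨b, by simp [hb], by simp⟩)
      intro x hx
      simp only [Finset.mem_filter] at hx ⊢
      exact ⟨hx.1, by omega⟩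
    have := Finset.card_erase_add_one hb
    obtain ⟨S', hS', hsum'⟩ := hS₁.exists_sum_eq_add hg (b - 2)
    refine ⟨S', hS', ?_⟩
    rw [hsum', hsum₁, ← Finset.add_sum_erase S g hb, ← add_assoc, ← add_assoc,
      add_self_eq_sub_two_add_add_one hg]
  · by_cases hb1 : b - 1 ∈ S
    · have := card_filter_erase_sub_one_le hb1
      have := Finset.card_erase_add_one hb1
      obtain ⟨S', hS', hsum'⟩ := (hS.erase (b - 1)).exists_sum_eq_add hg (b + 1)
      refine ⟨S', hS', ?_⟩
      have h := hg (b - 1)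
      rw [show b - 1 + 1 = b by ring, show b - 1 + 2 = b + 1 by ring] at h
      rw [hsum', ← Finset.add_sum_erase S g hb1, ← h]
      abel
    · obtain ⟨Y, hY, -, -, hsum⟩ := hS.exists_sum_eq_add_of_notMem hg hb hb1
      exact ⟨Y, hY, hsum⟩
termination_by (S.filter (· ≤ b)).card + S.card
decreasing_by all_goals omega

theorem exists_isHoley_sum_eq (hg : ∀ k, g k + g (k + 1) = g (k + 2)) {α : Type*}
    (T : Finset α) (a : α → ℤ) : ∃ S : Finset ℤ, IsHoley S ∧ ∑ t ∈ T, g (a t) = ∑ s ∈ S, g s := by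
  induction T using Finset.cons_induction with
  | empty => exact ⟨∅, by simp [IsHoley], rfl⟩
  | cons t T _ ih =>
    obtain ⟨S, hS, hsum⟩ := ih
    obtain ⟨S', hS', hsum'⟩ := hS.exists_sum_eq_add hg (a t)
    exact ⟨S', hS', by rw [Finset.sum_cons, hsum, hsum']⟩

end FibonacciLike

theorem IsHoley.isZeckendorfRep_sort {U : Finset ℕ} (hU : IsHoley U) (hU₂ : ∀ k ∈ U, 2 ≤ k) :
    (U.sort (· ≥ ·)).IsZeckendorfRep := by
  refine List.Pairwise.isChain (List.pairwise_append.mpr ⟨?_, by simp, by simpa using hU₂⟩)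
  refine U.sortedGT_sort.pairwise.imp_of_mem fun {k l} hk hl hlt => ?_
  rw [Finset.mem_sort] at hk hl
  have : l + 1 ≠ k := fun h => hU l hl (h ▸ hk)
  omega

theorem IsHoley.eq_of_sum_fib_eq {U V : Finset ℕ} (hU : IsHoley U) (hV : IsHoley V)
    (hU₂ : ∀ k ∈ U, 2 ≤ k) (hV₂ : ∀ k ∈ V, 2 ≤ k)
    (h : ∑ k ∈ U, Nat.fib k = ∑ k ∈ V, Nat.fib k) : U = V := by
  have hsum (W : Finset ℕ) : ((W.sort (· ≥ ·)).map Nat.fib).sum = ∑ k ∈ W, Nat.fib k := by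
    rw [← List.sum_toFinset _ (W.sort_nodup _), Finset.sort_toFinset]
  have hsort : U.sort (· ≥ ·) = V.sort (· ≥ ·) := by
    rw [← Nat.zeckendorf_sum_fib (hU.isZeckendorfRep_sort hU₂),
      ← Nat.zeckendorf_sum_fib (hV.isZeckendorfRep_sort hV₂), hsum, hsum, h]
  rw [← U.sort_toFinset (· ≥ ·), hsort, Finset.sort_toFinset]

theorem IsHoley.image_toNat_add {S : Finset ℤ} (hS : IsHoley S) {n : ℤ}
    (hn : ∀ s ∈ S, 0 ≤ n + s) : IsHoley (S.image fun s => (n + s).toNat) := by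
  simp only [IsHoley, Finset.mem_image, not_exists, not_and]
  rintro _ ⟨s, hs, rfl⟩ s' hs' he
  have := hn s hs
  have := hn s' hs'
  exact hS s hs (by rwa [show s + 1 = s' by omega])

theorem IsHoley.eq_of_sum_fibZ_eq {S S' : Finset ℤ} (hS : IsHoley S) (hS' : IsHoley S') (n : ℤ)
    (hS₂ : ∀ s ∈ S, 2 ≤ n + s) (hS'₂ : ∀ s ∈ S', 2 ≤ n + s)
    (h : ∑ s ∈ S, fibZ (n + s) = ∑ s ∈ S', fibZ (n + s)) : S = S' := by
  set shift : ℤ → ℕ := fun s => (n + s).toNat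
  have hinj {W : Finset ℤ} (hW₂ : ∀ s ∈ W, 2 ≤ n + s) : Set.InjOn shift W :=
    fun s hs s' hs' he => by
      have := hW₂ s hs
      have := hW₂ s' hs'
      simp only [shift] at he
      omega
  have hbound {W : Finset ℤ} (hW₂ : ∀ s ∈ W, 2 ≤ n + s) : ∀ k ∈ W.image shift, 2 ≤ k := by
    simp only [Finset.mem_image, forall_exists_index, and_imp]
    rintro _ s hs rfl
    have := hW₂ s hs
    simp only [shift]
    omega
  have hunshift {W : Finset ℤ} (hW₂ : ∀ s ∈ W, 2 ≤ n + s) :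
      (W.image shift).image (fun k : ℕ => (k : ℤ) - n) = W := by
    rw [Finset.image_image]
    convert Finset.image_id (s := W) using 1
    refine Finset.image_congr fun s hs => ?_
    have := hW₂ s hs
    simp only [shift, Function.comp, id]
    omega
  have hholey {W : Finset ℤ} (hW : IsHoley W) (hW₂ : ∀ s ∈ W, 2 ≤ n + s) :=
    hW.image_toNat_add fun s hs => zero_le_two.trans (hW₂ s hs)
  have hsum : ∑ k ∈ S.image shift, Nat.fib k = ∑ k ∈ S'.image shift, Nat.fib k := by
    rw [Finset.sum_image (hinj hS₂), Finset.sum_image (hinj hS'₂)]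
    exact h
  rw [← hunshift hS₂, ← hunshift hS'₂,
    (hholey hS hS₂).eq_of_sum_fib_eq (hholey hS' hS'₂) (hbound hS₂) (hbound hS'₂) hsum]

theorem natCast_sum_fibZ {ι : Type*} (I : Finset ι) (e : ι → ℤ) {n : ℤ}
    (h : ∀ i ∈ I, -e i < n) :
    ((∑ i ∈ I, fibZ (n + e i) : ℕ) : ℤ) = ∑ i ∈ I, Int.fib (n + e i) := by
  push_cast
  refine Finset.sum_congr rfl fun i hi => ?_
  rw [fibZ, Int.fib_of_nonneg (by linarith [h i hi])]

theorem generalized_zeckendorf_family_identities {α : Type*} (T : Finset α) (a : α → ℤ) :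
    ∃! S : Finset ℤ, (∀ s ∈ S, s + 1 ∉ S) ∧
      ∀ n : ℤ, (∀ t ∈ T, -a t < n) → (∀ s ∈ S, -s < n) →
        ∑ t ∈ T, fibZ (n + a t) = ∑ s ∈ S, fibZ (n + s) := by
  have hfib (k : ℤ) : (fun m => Int.fib (m + k)) + (fun m => Int.fib (m + (k + 1))) =
      fun m => Int.fib (m + (k + 2)) := by
    funext m
    simp only [Pi.add_apply, ← add_assoc, Int.fib_add_two]
  obtain ⟨S, hS, hsum⟩ := exists_isHoley_sum_eq hfib T a
  have hrep (n : ℤ) (hT : ∀ t ∈ T, -a t < n) (hSn : ∀ s ∈ S, -s < n) :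
      ∑ t ∈ T, fibZ (n + a t) = ∑ s ∈ S, fibZ (n + s) := by
    have := congrFun hsum n
    simp only [Finset.sum_apply] at this
    exact_mod_cast (natCast_sum_fibZ T a hT).trans (this.trans (natCast_sum_fibZ S id hSn).symm)
  refine ⟨S, ⟨hS, hrep⟩, fun S' ⟨hS', hrep'⟩ => ?_⟩
  obtain ⟨m, hm⟩ := (T.image a ∪ S ∪ S').bddBelow
  simp only [mem_lowerBounds, Finset.coe_union, Set.mem_union, Finset.coe_image,
    Set.mem_image, Finset.mem_coe] at hm
  have hT : ∀ t ∈ T, -a t < 2 - m := fun t ht => by linarith [hm _ (.inl (.inl ⟨t, ht, rfl⟩))]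
  have hSm : ∀ s ∈ S, 2 ≤ 2 - m + s := fun s hs => by linarith [hm s (.inl (.inr hs))]
  have hS'm : ∀ s ∈ S', 2 ≤ 2 - m + s := fun s hs => by linarith [hm s (.inr hs)]
  refine (hS.eq_of_sum_fibZ_eq hS' (2 - m) hSm hS'm ?_).symm
  rw [← hrep _ hT fun s hs => by linarith [hSm s hs],
    hrep' _ hT fun s hs => by linarith [hS'm s hs]]
end

section
/- For every positive integer k, there exists a unique finite holey subset S_k of ℤ such that k·f_n = ∑_{s∈S_k} f_{n+s} for all integers n > max{-s : s ∈ S_k} (Zeckendorf family identities). -/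
namespace ZFI


/-- Signed Fibonacci over ℤ. -/
def F : ℤ → ℤ := fun n => if 0 ≤ n then (Nat.fib n.toNat : ℤ) else (-1)^((-n).toNat+1) * Nat.fib (-n).toNat

lemma F_of_nonneg {n : ℤ} (h : 0 ≤ n) : F n = Nat.fib n.toNat := by simp [F, h]

lemma F_zero : F 0 = 0 := by simp [F]
lemma F_one : F 1 = 1 := by simp [F]
lemma F_neg_one : F (-1) = 1 := by norm_num [F]
lemma F_neg_two : F (-2) = -1 := by
  have : ¬ (0:ℤ) ≤ -2 := by norm_num
  rw [F]
  simp only [this, if_false]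
  norm_num
  rfl

lemma F_add_two (n : ℤ) : F (n + 2) = F (n + 1) + F n := by
  rcases le_or_gt 0 n with h | h
  · rw [F_of_nonneg (by omega), F_of_nonneg (by omega), F_of_nonneg h]
    have h2 : (n+2).toNat = n.toNat + 2 := by omega
    have h1 : (n+1).toNat = n.toNat + 1 := by omega
    rw [h2, h1, Nat.fib_add_two]
    push_cast; ring
  · rcases eq_or_lt_of_le (by omega : n ≤ -1) with h1 | h1
    · subst h1; norm_num [F_one, F_zero, F_neg_one]
    · rcases eq_or_lt_of_le (by omega : n ≤ -2) with h2 | h2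
      · subst h2; norm_num [F_zero, F_neg_one, F_neg_two]
      · -- n ≤ -3
        have hm : ∃ j : ℕ, n = -((j:ℤ)+3) := ⟨(-n-3).toNat, by omega⟩
        obtain ⟨j, rfl⟩ := hm
        have key : ∀ m : ℕ, F (-((m:ℤ)+1)) = (-1)^(m+2) * Nat.fib (m+1) := by
          intro m
          have hneg : ¬ (0:ℤ) ≤ -((m:ℤ)+1) := by omega
          rw [F]
          simp only [hneg, if_false]
          have : (-(-((m:ℤ)+1))).toNat = m + 1 := by omega
          rw [this]
        have e2 : (-(((j:ℤ)+3)) + 2) = -((j:ℤ)+1) := by ring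
        have e1 : (-(((j:ℤ)+3)) + 1) = -(((j+1:ℕ):ℤ)+1) := by push_cast; ring
        have e0 : (-(((j:ℤ)+3))) = -(((j+2:ℕ):ℤ)+1) := by push_cast; ring
        rw [e2, e1, e0, key, key, key]
        have : Nat.fib (j+2+1) = Nat.fib (j+1+1) + Nat.fib (j+1) := by
          rw [Nat.fib_add_two]; ring_nf
        rw [this]
        push_cast [pow_add, pow_succ]
        ring

lemma F_succ (x : ℤ) : F (x + 1) = F x + F (x - 1) := by
  have := F_add_two (x - 1)
  have e : x - 1 + 2 = x + 1 := by ring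
  have e' : x - 1 + 1 = x := by ring
  rw [e, e'] at this
  exact this

lemma F_pos {s : ℤ} (h : 1 ≤ s) : 0 < F s := by
  rw [F_of_nonneg (by omega)]
  exact_mod_cast Nat.fib_pos.2 (by omega)




lemma F_pair (u : ℤ) : F (u + 1) + F (u - 2) = F u + F u := by
  have h1 := F_succ u
  have h2 := F_succ (u - 1)
  have e1 : u - 1 + 1 = u := by ring
  have e2 : u - 1 - 1 = u - 2 := by ring
  rw [e1, e2] at h2
  linarith

def Holey (S : Finset ℤ) : Prop := ∀ s ∈ S, s + 1 ∉ S

lemma holey_subset {S T : Finset ℤ} (h : T ⊆ S) (hS : Holey S) : Holey T :=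
  fun s hs hs1 => hS s (h hs) (h hs1)

lemma down_insert : ∀ (N : ℕ) (S : Finset ℤ), S.card ≤ N → Holey S → ∀ a : ℤ, (∀ s ∈ S, s ≤ a) →
    ∃ T : Finset ℤ, Holey T ∧ (∀ t ∈ T, t ≤ a + 1) ∧
      ∀ c : ℤ, ∑ t ∈ T, F (t + c) = (∑ s ∈ S, F (s + c)) + F (a + c) := by
  intro N
  induction N with
  | zero =>
    intro S hcard _ a _
    have hS : S = ∅ := Finset.card_eq_zero.1 (Nat.le_zero.1 hcard)
    subst hS
    refine ⟨{a}, ?_, ?_, ?_⟩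
    · intro t ht h; simp at ht h; omega
    · intro t ht; simp at ht; omega
    · intro c; simp
  | succ N ih =>
    intro S hcard hS a hbd
    by_cases ha : a ∈ S
    · -- a ∈ S : 2 F a = F (a+1) + F (a-2)
      have hS' : Holey (S.erase a) := holey_subset (Finset.erase_subset _ _) hS
      have hbd' : ∀ s ∈ S.erase a, s ≤ a - 2 := by
        intro s hs
        have h1 : s ∈ S := Finset.mem_of_mem_erase hs
        have h2 : s ≠ a := Finset.ne_of_mem_erase hs
        have h3 : s ≠ a - 1 := by
          intro h; apply hS s h1; rw [h]; simpa using ha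
        have := hbd s h1; omega
      have hcard' : (S.erase a).card ≤ N := by
        have := Finset.card_erase_of_mem ha; omega
      obtain ⟨T', hT'h, hT'b, hT'v⟩ := ih (S.erase a) hcard' hS' (a - 2) hbd'
      have hb' : ∀ t ∈ T', t ≤ a - 1 := by intro t ht; have := hT'b t ht; omega
      have hnot : (a+1) ∉ T' := by intro h; have := hb' _ h; omega
      refine ⟨insert (a+1) T', ?_, ?_, ?_⟩
      · intro t ht
        rcases Finset.mem_insert.1 ht with rfl | ht'
        · intro h
          rcases Finset.mem_insert.1 h with h | h
          · omega
          · have := hb' _ h; omega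
        · intro h
          rcases Finset.mem_insert.1 h with h | h
          · have := hb' _ ht'; omega
          · exact hT'h t ht' h
      · intro t ht
        rcases Finset.mem_insert.1 ht with rfl | ht'
        · omega
        · have := hb' _ ht'; omega
      · intro c
        rw [Finset.sum_insert hnot, hT'v c, ← Finset.add_sum_erase S _ ha]
        have e1 : a + 1 + c = (a + c) + 1 := by ring
        have e2 : a - 2 + c = (a + c) - 2 := by ring
        rw [e1, e2]
        have := F_pair (a + c)
        linarith
    · by_cases hb : a - 1 ∈ S
      · have hS' : Holey (S.erase (a-1)) := holey_subset (Finset.erase_subset _ _) hS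
        have hnot : (a+1) ∉ S.erase (a-1) := by
          intro h
          have := hbd _ (Finset.mem_of_mem_erase h); omega
        refine ⟨insert (a+1) (S.erase (a-1)), ?_, ?_, ?_⟩
        · intro t ht
          rcases Finset.mem_insert.1 ht with rfl | ht'
          · intro h
            rcases Finset.mem_insert.1 h with h | h
            · omega
            · have := hbd _ (Finset.mem_of_mem_erase h); omega
          · intro h
            rcases Finset.mem_insert.1 h with h | h
            · -- t + 1 = a + 1, so t = a ∈ S, but a ∉ S
              have : t = a := by omega
              subst this
              exact ha (Finset.mem_of_mem_erase ht')
            · exact hS' t ht' h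
        · intro t ht
          rcases Finset.mem_insert.1 ht with rfl | ht'
          · omega
          · have := hbd _ (Finset.mem_of_mem_erase ht'); omega
        · intro c
          rw [Finset.sum_insert hnot, ← Finset.add_sum_erase S _ hb]
          have e1 : a + 1 + c = (a + c) + 1 := by ring
          have e2 : a - 1 + c = (a + c) - 1 := by ring
          rw [e1, e2]
          have := F_succ (a + c)
          linarith
      · have hnot : a ∉ S := ha
        refine ⟨insert a S, ?_, ?_, ?_⟩
        · intro t ht
          rcases Finset.mem_insert.1 ht with rfl | ht'
          · intro h
            rcases Finset.mem_insert.1 h with h | h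
            · omega
            · have := hbd _ h; omega
          · intro h
            rcases Finset.mem_insert.1 h with h | h
            · have he : t = a - 1 := by omega
              exact hb (he ▸ ht')
            · exact hS t ht' h
        · intro t ht
          rcases Finset.mem_insert.1 ht with rfl | ht'
          · omega
          · have := hbd _ ht'; omega
        · intro c
          rw [Finset.sum_insert hnot]; ring

lemma up_insert : ∀ (N : ℕ) (S : Finset ℤ), S.card ≤ N → Holey S → ∀ a : ℤ, (∀ s ∈ S, a + 1 ≤ s) →
    ∃ T : Finset ℤ, Holey T ∧ (∀ t ∈ T, a ≤ t) ∧
      ∀ c : ℤ, ∑ t ∈ T, F (t + c) = (∑ s ∈ S, F (s + c)) + F (a + c) := by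
  intro N
  induction N with
  | zero =>
    intro S hcard _ a _
    have hS : S = ∅ := Finset.card_eq_zero.1 (Nat.le_zero.1 hcard)
    subst hS
    exact ⟨{a}, by intro t ht h; simp at ht h; omega,
      by intro t ht; simp at ht; omega, by intro c; simp⟩
  | succ N ih =>
    intro S hcard hS a hbd
    by_cases h1 : a + 1 ∈ S
    · have hS' : Holey (S.erase (a+1)) := holey_subset (Finset.erase_subset _ _) hS
      have hbd' : ∀ s ∈ S.erase (a+1), a + 2 + 1 ≤ s := by
        intro s hs
        have hm : s ∈ S := Finset.mem_of_mem_erase hs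
        have hne : s ≠ a + 1 := Finset.ne_of_mem_erase hs
        have hne2 : s ≠ a + 2 := by
          intro h
          apply hS (a+1) h1
          have e : a + 1 + 1 = s := by omega
          rw [e]; exact hm
        have := hbd s hm; omega
      have hcard' : (S.erase (a+1)).card ≤ N := by
        have := Finset.card_erase_of_mem h1; omega
      obtain ⟨T, hTh, hTb, hTv⟩ := ih (S.erase (a+1)) hcard' hS' (a + 2) hbd'
      refine ⟨T, hTh, by intro t ht; have := hTb t ht; omega, ?_⟩
      intro c
      rw [hTv c, ← Finset.add_sum_erase S _ h1]
      have e1 : a + 2 + c = (a + 1 + c) + 1 := by ring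
      have e2 : a + c = (a + 1 + c) - 1 := by ring
      rw [e1, e2]
      have := F_succ (a + 1 + c)
      linarith
    · have hnot : a ∉ S := by intro h; have := hbd _ h; omega
      refine ⟨insert a S, ?_, ?_, ?_⟩
      · intro t ht
        rcases Finset.mem_insert.1 ht with rfl | ht'
        · intro h
          rcases Finset.mem_insert.1 h with h | h
          · omega
          · exact h1 h
        · intro h
          rcases Finset.mem_insert.1 h with h | h
          · have := hbd _ ht'; omega
          · exact hS t ht' h
      · intro t ht
        rcases Finset.mem_insert.1 ht with rfl | ht'
        · omega
        · have := hbd _ ht'; omega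
      · intro c
        rw [Finset.sum_insert hnot]; ring


lemma insert_elt : ∀ (N : ℕ) (S : Finset ℤ), S.card ≤ N → Holey S → ∀ a : ℤ,
    ∃ T : Finset ℤ, Holey T ∧
      ∀ c : ℤ, ∑ t ∈ T, F (t + c) = (∑ s ∈ S, F (s + c)) + F (a + c) := by
  intro N
  induction N with
  | zero =>
    intro S hcard _ a
    have hS : S = ∅ := Finset.card_eq_zero.1 (Nat.le_zero.1 hcard)
    subst hS
    exact ⟨{a}, by intro t ht h; simp at ht h; omega, by intro c; simp⟩
  | succ N ih =>
    intro S hcard hS a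
    by_cases h1 : a + 1 ∈ S
    · have hS' : Holey (S.erase (a+1)) := holey_subset (Finset.erase_subset _ _) hS
      have hcard' : (S.erase (a+1)).card ≤ N := by
        have := Finset.card_erase_of_mem h1; omega
      obtain ⟨T, hTh, hTv⟩ := ih (S.erase (a+1)) hcard' hS' (a+2)
      refine ⟨T, hTh, ?_⟩
      intro c
      rw [hTv c, ← Finset.add_sum_erase S _ h1]
      have e1 : a + 2 + c = (a + 1 + c) + 1 := by ring
      have e2 : a + c = (a + 1 + c) - 1 := by ring
      rw [e1, e2]
      have := F_succ (a + 1 + c)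
      linarith
    · by_cases h2 : a - 1 ∈ S
      · have hS' : Holey (S.erase (a-1)) := holey_subset (Finset.erase_subset _ _) hS
        have hcard' : (S.erase (a-1)).card ≤ N := by
          have := Finset.card_erase_of_mem h2; omega
        obtain ⟨T, hTh, hTv⟩ := ih (S.erase (a-1)) hcard' hS' (a+1)
        refine ⟨T, hTh, ?_⟩
        intro c
        rw [hTv c, ← Finset.add_sum_erase S _ h2]
        have e1 : a + 1 + c = (a + c) + 1 := by ring
        have e2 : a - 1 + c = (a + c) - 1 := by ring
        rw [e1, e2]
        have := F_succ (a + c)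
        linarith
      · by_cases h3 : a ∈ S
        · -- split into Low and High around a
          set S' := S.erase a with hS'def
          have hsub : S' ⊆ S := Finset.erase_subset _ _
          set Low := S'.filter (fun s => s < a) with hLdef
          set High := S'.filter (fun s => a < s) with hHdef
          have hLsub : Low ⊆ S := (Finset.filter_subset _ _).trans hsub
          have hHsub : High ⊆ S := (Finset.filter_subset _ _).trans hsub
          have hLbd : ∀ s ∈ Low, s ≤ a - 2 := by
            intro s hs
            have hlt : s < a := (Finset.mem_filter.1 hs).2
            have hmem : s ∈ S := hLsub hs
            have : s ≠ a - 1 := by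
              intro h
              apply hS s hmem
              have e : s + 1 = a := by omega
              rw [e]; exact h3
            omega
          have hHbd : ∀ s ∈ High, a + 1 + 1 ≤ s := by
            intro s hs
            have hlt : a < s := (Finset.mem_filter.1 hs).2
            have hmem : s ∈ S := hHsub hs
            have : s ≠ a + 1 := by intro h; exact hS a h3 (h ▸ hmem)
            omega
          have hcard' : S'.card ≤ N := by
            have h := Finset.card_erase_of_mem h3
            rw [← hS'def] at h
            omega
          obtain ⟨L, hLh, hLb, hLv⟩ := down_insert N Low
            (le_trans (Finset.card_le_card (Finset.filter_subset _ _)) hcard')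
            (holey_subset hLsub hS) (a - 2) hLbd
          obtain ⟨H, hHh, hHb, hHv⟩ := up_insert N High
            (le_trans (Finset.card_le_card (Finset.filter_subset _ _)) hcard')
            (holey_subset hHsub hS) (a + 1) hHbd
          have hLb' : ∀ t ∈ L, t ≤ a - 1 := by intro t ht; have := hLb t ht; omega
          have hdisj : Disjoint L H := by
            rw [Finset.disjoint_left]
            intro t htL htH
            have := hLb' t htL
            have := hHb t htH
            omega
          have hsplit : Low ∪ High = S' := by
            ext s
            simp only [Finset.mem_union, hLdef, hHdef, Finset.mem_filter]
            constructor
            · rintro (⟨h, _⟩ | ⟨h, _⟩) <;> exact h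
            · intro h
              have : s ≠ a := Finset.ne_of_mem_erase h
              rcases lt_or_gt_of_ne this with hl | hg
              · exact Or.inl ⟨h, hl⟩
              · exact Or.inr ⟨h, hg⟩
          have hdisj0 : Disjoint Low High := by
            rw [Finset.disjoint_left]
            intro t htL htH
            have := (Finset.mem_filter.1 htL).2
            have := (Finset.mem_filter.1 htH).2
            omega
          refine ⟨L ∪ H, ?_, ?_⟩
          · intro t ht
            rcases Finset.mem_union.1 ht with ht' | ht'
            · intro h
              rcases Finset.mem_union.1 h with h' | h'
              · exact hLh t ht' h'
              · have := hLb' t ht'; have := hHb _ h'; omega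
            · intro h
              rcases Finset.mem_union.1 h with h' | h'
              · have := hHb t ht'; have := hLb' _ h'; omega
              · exact hHh t ht' h'
          · intro c
            rw [Finset.sum_union hdisj, hLv c, hHv c,
              ← Finset.add_sum_erase S _ h3, ← hS'def, ← hsplit,
              Finset.sum_union hdisj0]
            have e1 : a + 1 + c = (a + c) + 1 := by ring
            have e2 : a - 2 + c = (a + c) - 2 := by ring
            rw [e1, e2]
            have := F_pair (a + c)
            linarith
        · refine ⟨insert a S, ?_, ?_⟩
          · intro t ht
            rcases Finset.mem_insert.1 ht with rfl | ht'
            · intro h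
              rcases Finset.mem_insert.1 h with h | h
              · omega
              · exact h1 h
            · intro h
              rcases Finset.mem_insert.1 h with h | h
              · have he : t = a - 1 := by omega
                exact h2 (he ▸ ht')
              · exact hS t ht' h
          · intro c
            rw [Finset.sum_insert h3]; ring

lemma exists_good (k : ℕ) (hk : 1 ≤ k) :
    ∃ S : Finset ℤ, Holey S ∧ ∀ c : ℤ, ∑ s ∈ S, F (s + c) = (k : ℤ) * F c := by
  induction k, hk using Nat.le_induction with
  | base =>
    refine ⟨{0}, ?_, ?_⟩
    · intro t ht h; simp at ht h; omega
    · intro c; simp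
  | succ k hk ih =>
    obtain ⟨S, hSh, hSv⟩ := ih
    obtain ⟨T, hTh, hTv⟩ := insert_elt S.card S le_rfl hSh 0
    refine ⟨T, hTh, ?_⟩
    intro c
    rw [hTv c, hSv c]
    have e : (0 : ℤ) + c = c := by ring
    rw [e]
    push_cast
    ring



lemma zeck_lt : ∀ (m : ℕ) (U : Finset ℕ), (∀ i ∈ U, 2 ≤ i) → (∀ i ∈ U, i + 1 ∉ U) →
    (∀ i ∈ U, i ≤ m) → ∑ i ∈ U, Nat.fib i < Nat.fib (m + 1) := by
  intro m
  induction m using Nat.strong_induction_on with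
  | _ m ih =>
    intro U h2 hh hbd
    rcases Finset.eq_empty_or_nonempty U with rfl | hne
    · simpa using Nat.fib_pos.2 (by omega)
    · set M := U.max' hne with hMdef
      have hMmem : M ∈ U := U.max'_mem hne
      have hM2 : 2 ≤ M := h2 M hMmem
      have hMm : M ≤ m := hbd M hMmem
      have hbd' : ∀ i ∈ U.erase M, i ≤ M - 2 := by
        intro i hi
        have h1 : i ∈ U := Finset.mem_of_mem_erase hi
        have hne' : i ≠ M := Finset.ne_of_mem_erase hi
        have hle : i ≤ M := U.le_max' i h1
        have : i ≠ M - 1 := by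
          intro h
          apply hh i h1
          have e : i + 1 = M := by omega
          rw [e]; exact hMmem
        omega
      have hlt : ∑ i ∈ U.erase M, Nat.fib i < Nat.fib (M - 2 + 1) :=
        ih (M - 2) (by omega) (U.erase M)
          (fun i hi => h2 i (Finset.mem_of_mem_erase hi))
          (fun i hi h => hh i (Finset.mem_of_mem_erase hi) (Finset.mem_of_mem_erase h))
          hbd'
      have hsum : ∑ i ∈ U, Nat.fib i = Nat.fib M + ∑ i ∈ U.erase M, Nat.fib i :=
        (Finset.add_sum_erase U _ hMmem).symm
      have hfib : Nat.fib (M + 1) = Nat.fib M + Nat.fib (M - 1) := by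
        have e : M + 1 = (M - 1) + 2 := by omega
        rw [e, Nat.fib_add_two]
        have e2 : M - 1 + 1 = M := by omega
        rw [e2]
        exact Nat.add_comm _ _
      have e3 : M - 2 + 1 = M - 1 := by omega
      rw [e3] at hlt
      have hmono : Nat.fib (M + 1) ≤ Nat.fib (m + 1) := Nat.fib_mono (by omega)
      omega

lemma zeck_erase_uniq : ∀ (n : ℕ) (U V : Finset ℕ),
    (∀ i ∈ U, 2 ≤ i) → (∀ i ∈ U, i + 1 ∉ U) →
    (∀ i ∈ V, 2 ≤ i) → (∀ i ∈ V, i + 1 ∉ V) →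
    (∑ i ∈ U, Nat.fib i = n) → (∑ i ∈ V, Nat.fib i = n) → U = V := by
  intro n
  induction n using Nat.strong_induction_on with
  | _ n ih =>
    intro U V hU2 hUh hV2 hVh hUs hVs
    rcases Finset.eq_empty_or_nonempty U with rfl | hUne
    · simp at hUs
      rcases Finset.eq_empty_or_nonempty V with rfl | hVne
      · rfl
      · exfalso
        obtain ⟨v, hv⟩ := hVne
        have : 0 < Nat.fib v := Nat.fib_pos.2 (by have := hV2 v hv; omega)
        have hle : Nat.fib v ≤ ∑ i ∈ V, Nat.fib i :=
          Finset.single_le_sum (fun i _ => Nat.zero_le _) hv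
        omega
    · rcases Finset.eq_empty_or_nonempty V with rfl | hVne
      · exfalso
        simp at hVs
        obtain ⟨u, hu⟩ := hUne
        have : 0 < Nat.fib u := Nat.fib_pos.2 (by have := hU2 u hu; omega)
        have hle : Nat.fib u ≤ ∑ i ∈ U, Nat.fib i :=
          Finset.single_le_sum (fun i _ => Nat.zero_le _) hu
        omega
      · set MU := U.max' hUne with hMU
        set MV := V.max' hVne with hMV
        have hMUmem := U.max'_mem hUne
        have hMVmem := V.max'_mem hVne
        have hkey : ∀ (A B : Finset ℕ) (hA : A.Nonempty) (hB : B.Nonempty),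
            (∀ i ∈ A, 2 ≤ i) → (∀ i ∈ A, i + 1 ∉ A) →
            (∑ i ∈ A, Nat.fib i = n) → (∑ i ∈ B, Nat.fib i = n) →
            A.max' hA < B.max' hB → False := by
          intro A B hA hB hA2 hAh hAs hBs hlt
          have h1 : ∑ i ∈ A, Nat.fib i < Nat.fib (A.max' hA + 1) :=
            zeck_lt (A.max' hA) A hA2 hAh (fun i hi => A.le_max' i hi)
          have h2 : Nat.fib (A.max' hA + 1) ≤ Nat.fib (B.max' hB) := Nat.fib_mono (by omega)
          have h3 : Nat.fib (B.max' hB) ≤ ∑ i ∈ B, Nat.fib i :=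
            Finset.single_le_sum (fun i _ => Nat.zero_le _) (B.max'_mem hB)
          omega
        have hMeq : MU = MV := by
          rcases lt_trichotomy MU MV with h | h | h
          · exact absurd h (fun h => hkey U V hUne hVne hU2 hUh hUs hVs h)
          · exact h
          · exact absurd h (fun h => hkey V U hVne hUne hV2 hVh hVs hUs h)
        have hfibpos : 0 < Nat.fib MU := Nat.fib_pos.2 (by have := hU2 MU hMUmem; omega)
        have hUsum : Nat.fib MU + ∑ i ∈ U.erase MU, Nat.fib i = n := by
          rw [Finset.add_sum_erase U _ hMUmem]; exact hUs
        have hVsum : Nat.fib MU + ∑ i ∈ V.erase MU, Nat.fib i = n := by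
          rw [hMeq, Finset.add_sum_erase V _ hMVmem]; exact hVs
        have hrec : U.erase MU = V.erase MU := by
          apply ih (∑ i ∈ U.erase MU, Nat.fib i) (by omega)
          · exact fun i hi => hU2 i (Finset.mem_of_mem_erase hi)
          · exact fun i hi h => hUh i (Finset.mem_of_mem_erase hi) (Finset.mem_of_mem_erase h)
          · exact fun i hi => hV2 i (Finset.mem_of_mem_erase hi)
          · exact fun i hi h => hVh i (Finset.mem_of_mem_erase hi) (Finset.mem_of_mem_erase h)
          · rfl
          · omega
        have hMVmem' : MU ∈ V := by rw [hMeq]; exact hMVmem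
        calc U = insert MU (U.erase MU) := (Finset.insert_erase hMUmem).symm
          _ = insert MU (V.erase MU) := by rw [hrec]
          _ = V := Finset.insert_erase hMVmem'

/-- Any holey set with the value property satisfies the fibZ identity. -/
lemma satisfies (k : ℕ) (hk : 1 ≤ k) (S : Finset ℤ) (hSh : Holey S)
    (hSv : ∀ c : ℤ, ∑ s ∈ S, F (s + c) = (k : ℤ) * F c) :
    ∀ n : ℤ, (∀ s ∈ S, -s < n) → k * fibZ n = ∑ s ∈ S, fibZ (n + s) := by
  intro n hn
  have hne : S.Nonempty := by
    rcases Finset.eq_empty_or_nonempty S with rfl | h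
    · exfalso
      have h := hSv (-1)
      rw [F_neg_one] at h
      simp at h
      omega
    · exact h
  have hs0 : ∃ s ∈ S, s ≤ 0 := by
    by_contra h
    push_neg at h
    have hpos : 0 < ∑ s ∈ S, F (s + 0) :=
      Finset.sum_pos (fun s hs => F_pos (by have := h s hs; omega)) hne
    rw [hSv 0, F_zero] at hpos
    simp at hpos
  obtain ⟨s0, hs0m, hs0le⟩ := hs0
  have hn1 : 1 ≤ n := by have := hn s0 hs0m; omega
  have key := hSv n
  have hcast : ∀ s ∈ S, F (s + n) = ((fibZ (n + s) : ℕ) : ℤ) := by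
    intro s hs
    have hnn : 0 ≤ s + n := by have := hn s hs; omega
    rw [F_of_nonneg hnn]
    unfold fibZ
    rw [show s + n = n + s by ring]
  rw [Finset.sum_congr rfl hcast] at key
  have hFn : F n = ((fibZ n : ℕ) : ℤ) := by
    rw [F_of_nonneg (by omega)]; rfl
  rw [hFn] at key
  have : ((∑ s ∈ S, fibZ (n + s) : ℕ) : ℤ) = ((k * fibZ n : ℕ) : ℤ) := by
    push_cast
    rw [key]
  exact (Nat.cast_inj.1 this).symm


end ZFI

theorem zeckendorf_family_identities (k : ℕ) (hk : 1 ≤ k) :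
    ∃! S : Finset ℤ, (∀ s ∈ S, s + 1 ∉ S) ∧
      ∀ n : ℤ, (∀ s ∈ S, -s < n) →
        k * fibZ n = ∑ s ∈ S, fibZ (n + s) := by
  obtain ⟨S, hSh, hSv⟩ := ZFI.exists_good k hk
  refine ⟨S, ⟨hSh, ZFI.satisfies k hk S hSh hSv⟩, ?_⟩
  rintro S' ⟨h'h, h'v⟩
  have hSid := ZFI.satisfies k hk S hSh hSv
  -- choose a large n
  set n : ℤ := 2 + ∑ s ∈ S' ∪ S, |s| with hndef
  have habs : ∀ s ∈ S' ∪ S, |s| ≤ ∑ t ∈ S' ∪ S, |t| :=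
    fun s hs => Finset.single_le_sum (fun t _ => abs_nonneg t) hs
  have hbig : ∀ s ∈ S' ∪ S, 2 ≤ n + s := by
    intro s hs
    have h1 := habs s hs
    have h2 : -s ≤ |s| := neg_le_abs s
    omega
  have hrange : ∀ s ∈ S' ∪ S, -s < n := by
    intro s hs
    have := hbig s hs; omega
  have hid1 : k * fibZ n = ∑ s ∈ S', fibZ (n + s) :=
    h'v n (fun s hs => hrange s (Finset.mem_union_left _ hs))
  have hid2 : k * fibZ n = ∑ s ∈ S, fibZ (n + s) :=
    hSid n (fun s hs => hrange s (Finset.mem_union_right _ hs))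
  -- transfer to ℕ index sets
  have hinj : ∀ T : Finset ℤ, T ⊆ S' ∪ S →
      ∀ x ∈ T, ∀ y ∈ T, (n + x).toNat = (n + y).toNat → x = y := by
    intro T hT x hx y hy h
    have h1 := hbig x (hT hx)
    have h2 := hbig y (hT hy)
    omega
  have hsum : ∀ T : Finset ℤ, T ⊆ S' ∪ S →
      ∑ i ∈ T.image (fun s => (n + s).toNat), Nat.fib i = ∑ s ∈ T, fibZ (n + s) := by
    intro T hT
    rw [Finset.sum_image (hinj T hT)]
    rfl
  have h2mem : ∀ T : Finset ℤ, T ⊆ S' ∪ S →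
      ∀ i ∈ T.image (fun s => (n + s).toNat), 2 ≤ i := by
    intro T hT i hi
    obtain ⟨s, hs, rfl⟩ := Finset.mem_image.1 hi
    have := hbig s (hT hs)
    omega
  have hhol : ∀ T : Finset ℤ, T ⊆ S' ∪ S → (∀ t ∈ T, t + 1 ∉ T) →
      ∀ i ∈ T.image (fun s => (n + s).toNat), i + 1 ∉ T.image (fun s => (n + s).toNat) := by
    intro T hT hh i hi h1
    obtain ⟨s, hs, hse⟩ := Finset.mem_image.1 hi
    obtain ⟨t, ht, hte⟩ := Finset.mem_image.1 h1
    have hb1 := hbig s (hT hs)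
    have hb2 := hbig t (hT ht)
    have : t = s + 1 := by omega
    exact hh s hs (this ▸ ht)
  have hsub1 : S' ⊆ S' ∪ S := Finset.subset_union_left
  have hsub2 : S ⊆ S' ∪ S := Finset.subset_union_right
  have hUeq : S'.image (fun s => (n + s).toNat) = S.image (fun s => (n + s).toNat) := by
    apply ZFI.zeck_erase_uniq (k * fibZ n)
    · exact h2mem S' hsub1
    · exact hhol S' hsub1 h'h
    · exact h2mem S hsub2
    · exact hhol S hsub2 hSh
    · rw [hsum S' hsub1]; exact hid1.symm
    · rw [hsum S hsub2]; exact hid2.symm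
  ext s
  constructor
  · intro hs
    have : (n + s).toNat ∈ S.image (fun s => (n + s).toNat) := by
      rw [← hUeq]
      exact Finset.mem_image_of_mem _ hs
    obtain ⟨t, ht, hte⟩ := Finset.mem_image.1 this
    have hb1 := hbig s (hsub1 hs)
    have hb2 := hbig t (hsub2 ht)
    have : t = s := by omega
    exact this ▸ ht
  · intro hs
    have : (n + s).toNat ∈ S'.image (fun s => (n + s).toNat) := by
      rw [hUeq]
      exact Finset.mem_image_of_mem _ hs
    obtain ⟨t, ht, hte⟩ := Finset.mem_image.1 this
    have hb1 := hbig s (hsub2 hs)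
    have hb2 := hbig t (hsub1 ht)
    have : t = s := by omega
    exact this ▸ ht
end
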